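/- For 1 < p ≤ 2 and any two vectors x, y in ℝ^N, one has (1 + |x|^2 + |y|^2)^((2-p)/2) · ((|x|^(p-2)x - |y|^(p-2)y) · (x - y)) ≥ (p - 1)|x - y|^2. -/

import Mathlib

/-!
With `a = ‖x‖`, `b = ‖y‖` and `t = ⟪x, y⟫`, the inner product splits as
`(a^(p-1) - b^(p-1)) (a - b) + (a^(p-2) + b^(p-2)) (a b - t)` and
`‖x - y‖² = (a - b)² + 2 (a b - t)`. Both pieces are compared termwise using
`s = (1 + a² + b²)^((p-2)/2) ≤ min (a^(p-2)) (b^(p-2))`: the radial one by the mean value theorem,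
since `(p-1) τ^(p-2) ≥ (p-1) s` on `[0, max a b]`, the angular one because `a b - t ≥ 0`
(Cauchy–Schwarz) and `2 (p - 1) ≤ 2`.
-/

open Real Set

lemma rpow_div_two_le_rpow_of_sq_le {c M e : ℝ} (hc : 0 < c) (hcM : c ^ 2 ≤ M) (he : e ≤ 0) :
    M ^ (e / 2) ≤ c ^ e := by
  calc M ^ (e / 2) ≤ (c ^ 2) ^ (e / 2) := rpow_le_rpow_of_nonpos (by positivity) hcM (by linarith)
    _ = c ^ e := by rw [← rpow_natCast_mul hc.le]; congr 1; ring

lemma mul_sub_le_rpow_sub_rpow {p M a b : ℝ} (hp1 : 1 < p) (hp2 : p ≤ 2) (hb : 0 ≤ b)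
    (hba : b ≤ a) (haM : a ^ 2 ≤ M) :
    (p - 1) * M ^ ((p - 2) / 2) * (a - b) ≤ a ^ (p - 1) - b ^ (p - 1) := by
  have hderiv : ∀ t ∈ Ioo b a, HasDerivAt (fun t => t ^ (p - 1)) ((p - 1) * t ^ (p - 2)) t := by
    intro t ht
    convert hasDerivAt_rpow_const (p := p - 1) (Or.inl (hb.trans_lt ht.1).ne') using 3
    ring
  refine (convex_Icc b a).mul_sub_le_image_sub_of_le_deriv
    (fun t _ => (continuousAt_rpow_const t _ (Or.inr (by linarith))).continuousWithinAt)
    (fun t ht => ?_) (fun t ht => ?_) b (left_mem_Icc.2 hba) a (right_mem_Icc.2 hba) hba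
  · rw [interior_Icc] at ht
    exact (hderiv t ht).differentiableAt.differentiableWithinAt
  · rw [interior_Icc] at ht
    rw [(hderiv t ht).deriv]
    have ht0 : 0 < t := hb.trans_lt ht.1
    gcongr
    exact rpow_div_two_le_rpow_of_sq_le ht0 (le_trans (by nlinarith [ht.2]) haM) (by linarith)

lemma mul_sq_sub_le_rpow_sub_rpow_mul_sub {p M a b : ℝ} (hp1 : 1 < p) (hp2 : p ≤ 2)
    (ha : 0 ≤ a) (hb : 0 ≤ b) (haM : a ^ 2 ≤ M) (hbM : b ^ 2 ≤ M) :
    (p - 1) * M ^ ((p - 2) / 2) * (a - b) ^ 2 ≤ (a ^ (p - 1) - b ^ (p - 1)) * (a - b) := by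
  rcases le_total b a with hba | hab
  · have := mul_sub_le_rpow_sub_rpow hp1 hp2 hb hba haM
    calc _ = (p - 1) * M ^ ((p - 2) / 2) * (a - b) * (a - b) := by ring
      _ ≤ _ := by gcongr
  · have := mul_sub_le_rpow_sub_rpow hp1 hp2 ha hab hbM
    calc _ = (p - 1) * M ^ ((p - 2) / 2) * (b - a) * (b - a) := by ring
      _ ≤ (b ^ (p - 1) - a ^ (p - 1)) * (b - a) := by gcongr
      _ = _ := by ring

lemma mul_le_rpow_add_rpow_mul {p M a b t : ℝ} (hp2 : p ≤ 2)
    (ha : 0 ≤ a) (hb : 0 ≤ b) (haM : a ^ 2 ≤ M) (hbM : b ^ 2 ≤ M) (ht : |t| ≤ a * b) :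
    (p - 1) * M ^ ((p - 2) / 2) * (2 * (a * b - t)) ≤ (a ^ (p - 2) + b ^ (p - 2)) * (a * b - t) := by
  -- For `a = 0` the bound `M ^ ((p - 2) / 2) ≤ a ^ (p - 2)` fails (`0 ^ (p - 2) = 0` when `p < 2`),
  -- but then Cauchy–Schwarz forces `t = 0`.
  rcases ha.eq_or_lt with rfl | ha0
  · simp_all
  rcases hb.eq_or_lt with rfl | hb0
  · simp_all
  have hM : 0 ≤ M ^ ((p - 2) / 2) := rpow_nonneg (by nlinarith) _
  have hsa := rpow_div_two_le_rpow_of_sq_le ha0 haM (by linarith : p - 2 ≤ 0)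
  have hsb := rpow_div_two_le_rpow_of_sq_le hb0 hbM (by linarith : p - 2 ≤ 0)
  have htab : 0 ≤ a * b - t := by linarith [le_abs_self t]
  calc _ = ((p - 1) * M ^ ((p - 2) / 2) + (p - 1) * M ^ ((p - 2) / 2)) * (a * b - t) := by ring
    _ ≤ _ := by gcongr <;> nlinarith

lemma inner_rpow_smul_sub_rpow_smul {E : Type*} [NormedAddCommGroup E] [InnerProductSpace ℝ E]
    {p : ℝ} (hp : p ≠ 1) (x y : E) :
    inner ℝ (‖x‖ ^ (p - 2) • x - ‖y‖ ^ (p - 2) • y) (x - y) =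
      (‖x‖ ^ (p - 1) - ‖y‖ ^ (p - 1)) * (‖x‖ - ‖y‖) +
        (‖x‖ ^ (p - 2) + ‖y‖ ^ (p - 2)) * (‖x‖ * ‖y‖ - inner ℝ x y) := by
  have hpow (a : ℝ) (ha : 0 ≤ a) : a ^ (p - 1) = a ^ (p - 2) * a := by
    rw [← rpow_add_one' ha (by contrapose! hp; linarith)]; ring_nf
  simp only [inner_sub_left, inner_sub_right, real_inner_smul_left, real_inner_self_eq_norm_sq,
    real_inner_comm x y, hpow _ (norm_nonneg x), hpow _ (norm_nonneg y)]
  ring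

theorem stmt_3 (N : ℕ) (p : ℝ) (hp1 : 1 < p) (hp2 : p ≤ 2) (x y : EuclideanSpace ℝ (Fin N)) :
    (p - 1) * ‖x - y‖ ^ 2 ≤
      (1 + ‖x‖ ^ 2 + ‖y‖ ^ 2) ^ ((2 - p) / 2) *
        inner ℝ ((‖x‖ ^ (p - 2)) • x - (‖y‖ ^ (p - 2)) • y) (x - y) := by
  set M := 1 + ‖x‖ ^ 2 + ‖y‖ ^ 2
  have hM : 0 < M := by positivity
  have hxM : ‖x‖ ^ 2 ≤ M := by linarith [sq_nonneg ‖y‖]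
  have hyM : ‖y‖ ^ 2 ≤ M := by linarith [sq_nonneg ‖x‖]
  have hradial := mul_sq_sub_le_rpow_sub_rpow_mul_sub hp1 hp2 (norm_nonneg x) (norm_nonneg y) hxM hyM
  have hangular := mul_le_rpow_add_rpow_mul hp2 (norm_nonneg x) (norm_nonneg y) hxM hyM
    (abs_real_inner_le_norm x y)
  have hnorm : ‖x - y‖ ^ 2 = (‖x‖ - ‖y‖) ^ 2 + 2 * (‖x‖ * ‖y‖ - inner ℝ x y) := by
    rw [norm_sub_sq_real]; ring
  have hcancel : M ^ ((2 - p) / 2) * M ^ ((p - 2) / 2) = 1 := by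
    rw [← rpow_add hM, show (2 - p) / 2 + (p - 2) / 2 = 0 by ring, rpow_zero]
  rw [inner_rpow_smul_sub_rpow_smul hp1.ne' x y, hnorm]
  calc _ = M ^ ((2 - p) / 2) * ((p - 1) * M ^ ((p - 2) / 2) * (‖x‖ - ‖y‖) ^ 2 +
        (p - 1) * M ^ ((p - 2) / 2) * (2 * (‖x‖ * ‖y‖ - inner ℝ x y))) := by
        linear_combination -(p - 1) * ((‖x‖ - ‖y‖) ^ 2 + 2 * (‖x‖ * ‖y‖ - inner ℝ x y)) * hcancel
    _ ≤ _ := by gcongr
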